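/- The column space of the (n,k)-binomial matrix B is invariant under the Laplacian L_k of F_k(G), and so is its orthogonal complement. -/

import Mathlib

open Finset

/-- The `k`-token graph of `G`: vertices are the `k`-subsets of `V`, two being adjacent
iff their symmetric difference is a pair `{a,b}` with `a ∈ A`, `b ∈ B`, `G.Adj a b`. -/
def tokenGraph {V : Type*} [DecidableEq V] (G : SimpleGraph V) (k : ℕ) :
    SimpleGraph {s : Finset V // s.card = k} where
  Adj A B := ∃ a b, a ∈ A.1 ∧ b ∈ B.1 ∧ G.Adj a b ∧ symmDiff A.1 B.1 = {a, b}
  symm := by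
    refine ⟨?_⟩
    rintro A B ⟨a, b, ha, hb, hab, hd⟩
    exact ⟨b, a, hb, ha, hab.symm, by rw [symmDiff_comm, hd, Finset.pair_comm]⟩
  loopless := by
    refine ⟨?_⟩
    rintro A ⟨a, b, ha, hb, hab, hd⟩
    rw [symmDiff_self] at hd
    exact (Finset.insert_ne_empty a {b}) hd.symm

noncomputable instance tokenGraph.instDecidableRelAdj {V : Type*} [DecidableEq V]
    (G : SimpleGraph V) (k : ℕ) : DecidableRel (tokenGraph G k).Adj :=
  Classical.decRel _

/-- The `(n,k)`-binomial matrix: rows are characteristic vectors of the `k`-subsets. -/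
def binMatrix (V : Type*) [DecidableEq V] (k : ℕ) :
    Matrix {s : Finset V // s.card = k} V ℝ :=
  fun A j => if j ∈ A.1 then 1 else 0

/-!
The binomial matrix intertwines the two Laplacians: `L_k B = B L`. Indeed `(B x)(A) = ∑_{a ∈ A} x a`,
and the neighbours of `A` in `F_k(G)` are the sets `A - a + b` with `a ∈ A`, `b ∉ A`, `a ~ b`, so
`(L_k B x)(A) = ∑ (x a - x b)` over the edges leaving `A`; adding the edges inside `A`, which cancel in
pairs, gives `∑_{a ∈ A} (L x)(a) = (B L x)(A)`. The orthogonal complement is then invariant because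
`L_k` is symmetric.
-/

namespace Finset

variable {α : Type*} [DecidableEq α] {s t : Finset α} {a b : α}

theorem symmDiff_insert_erase (ha : a ∈ s) (hb : b ∉ s) :
    symmDiff s (insert b (s.erase a)) = {a, b} := by
  ext j
  simp only [mem_symmDiff, mem_insert, mem_erase, mem_singleton]
  grind

theorem eq_insert_erase_of_symmDiff_eq_pair (ha : a ∈ s) (hb : b ∈ t)
    (h : symmDiff s t = {a, b}) : t = insert b (s.erase a) := by
  ext j
  have hj := congrArg (j ∈ ·) h
  simp only [mem_symmDiff, mem_insert, mem_singleton, eq_iff_iff] at hj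
  simp only [mem_insert, mem_erase]
  grind

theorem card_insert_erase_of_mem_of_notMem (ha : a ∈ s) (hb : b ∉ s) :
    (insert b (s.erase a)).card = s.card := by
  rw [card_insert_of_notMem (fun h => hb (mem_of_mem_erase h)), card_erase_add_one ha]

theorem sum_insert_erase {M : Type*} [AddCommGroup M] (f : α → M) (ha : a ∈ s) (hb : b ∉ s) :
    ∑ j ∈ insert b (s.erase a), f j = ∑ j ∈ s, f j - f a + f b := by
  rw [sum_insert (fun h => hb (mem_of_mem_erase h)), ← add_sum_erase s f ha]
  abel

theorem sum_sum_eq_zero_of_antisymm {ι M : Type*} [AddCommGroup M] [IsAddTorsionFree M]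
    (s : Finset ι) {f : ι → ι → M} (hf : ∀ a b, f b a = -f a b) :
    ∑ a ∈ s, ∑ b ∈ s, f a b = 0 :=
  self_eq_neg.mp <| by
    conv_lhs => rw [sum_comm]
    rw [← sum_neg_distrib]
    exact sum_congr rfl fun a _ => by
      rw [← sum_neg_distrib]
      exact sum_congr rfl fun b _ => hf a b

end Finset

open Matrix

theorem Matrix.IsSymm.mulVec_dotProduct {n R : Type*} [Fintype n] [CommSemiring R]
    {M : Matrix n n R} (hM : M.IsSymm) (v w : n → R) :
    M *ᵥ v ⬝ᵥ w = v ⬝ᵥ M *ᵥ w := by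
  rw [dotProduct_mulVec, ← mulVec_transpose, hM.eq]

theorem SimpleGraph.lapMatrix_mulVec_apply_eq_sum {V R : Type*} [Fintype V] [DecidableEq V]
    (G : SimpleGraph V) [DecidableRel G.Adj] [NonAssocRing R] (v : V) (x : V → R) :
    (G.lapMatrix R *ᵥ x) v = ∑ u ∈ G.neighborFinset v, (x v - x u) := by
  rw [SimpleGraph.lapMatrix_mulVec_apply, sum_sub_distrib, sum_const,
    SimpleGraph.card_neighborFinset_eq_degree, nsmul_eq_mul]

section TokenGraph

variable {V : Type*} [DecidableEq V] {G : SimpleGraph V} {k : ℕ}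

theorem tokenGraph_adj_iff {A B : {s : Finset V // s.card = k}} :
    (tokenGraph G k).Adj A B ↔
      ∃ a ∈ A.1, ∃ b ∉ A.1, G.Adj a b ∧ B.1 = insert b (A.1.erase a) := by
  constructor
  · rintro ⟨a, b, ha, hb, hab, hd⟩
    have hbA : b ∉ A.1 := fun hbA => by
      simpa [mem_symmDiff, hbA, hb] using congrArg (b ∈ ·) hd
    exact ⟨a, ha, b, hbA, hab, eq_insert_erase_of_symmDiff_eq_pair ha hb hd⟩
  · rintro ⟨a, ha, b, hb, hab, hB⟩
    exact ⟨a, b, ha, hB ▸ mem_insert_self b _, hab, hB ▸ symmDiff_insert_erase ha hb⟩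

theorem sum_neighborFinset_tokenGraph [Fintype V] [DecidableRel G.Adj] {M : Type*}
    [AddCommMonoid M] (A : {s : Finset V // s.card = k}) (g : Finset V → M) :
    ∑ B ∈ (tokenGraph G k).neighborFinset A, g B.1 =
      ∑ p ∈ A.1 ×ˢ A.1ᶜ with G.Adj p.1 p.2, g (insert p.2 (A.1.erase p.1)) := by
  symm
  refine sum_bij (fun p hp => ⟨insert p.2 (A.1.erase p.1), ?_⟩) ?_ ?_ ?_ fun _ _ => rfl
  · simp only [mem_filter, mem_product, mem_compl] at hp
    rw [card_insert_erase_of_mem_of_notMem hp.1.1 hp.1.2, A.2]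
  · intro p hp
    simp only [mem_filter, mem_product, mem_compl] at hp
    exact (SimpleGraph.mem_neighborFinset _ _ _).mpr
      (tokenGraph_adj_iff.mpr ⟨p.1, hp.1.1, p.2, hp.1.2, hp.2, rfl⟩)
  · intro p hp q hq hpq
    simp only [mem_filter, mem_product, mem_compl] at hp hq
    have hpair : ({p.1, p.2} : Finset V) = {q.1, q.2} := by
      rw [← symmDiff_insert_erase hp.1.1 hp.1.2, ← symmDiff_insert_erase hq.1.1 hq.1.2]
      exact congrArg (symmDiff A.1 ·.1) hpq
    have h1 := congrArg (p.1 ∈ ·) hpair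
    have h2 := congrArg (p.2 ∈ ·) hpair
    simp only [mem_insert, mem_singleton, true_or, or_true, eq_iff_iff, true_iff] at h1 h2
    grind
  · intro B hB
    obtain ⟨a, ha, b, hb, hab, hB⟩ :=
      tokenGraph_adj_iff.mp ((SimpleGraph.mem_neighborFinset _ _ _).mp hB)
    exact ⟨(a, b), by simp [ha, hb, hab], Subtype.ext hB.symm⟩

end TokenGraph

section BinMatrix

variable {V : Type*} [Fintype V] [DecidableEq V] {k : ℕ}

theorem binMatrix_mulVec_apply (x : V → ℝ) (A : {s : Finset V // s.card = k}) :
    (binMatrix V k *ᵥ x) A = ∑ j ∈ A.1, x j := by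
  simp [binMatrix, mulVec, dotProduct, ite_mul, sum_ite_mem]

theorem tokenGraph_lapMatrix_mulVec_binMatrix_mulVec (G : SimpleGraph V) [DecidableRel G.Adj]
    (x : V → ℝ) :
    (tokenGraph G k).lapMatrix ℝ *ᵥ (binMatrix V k *ᵥ x) =
      binMatrix V k *ᵥ (G.lapMatrix ℝ *ᵥ x) := by
  ext A
  calc ((tokenGraph G k).lapMatrix ℝ *ᵥ (binMatrix V k *ᵥ x)) A
      = ∑ B ∈ (tokenGraph G k).neighborFinset A, (∑ j ∈ A.1, x j - ∑ j ∈ B.1, x j) := by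
        simp only [SimpleGraph.lapMatrix_mulVec_apply_eq_sum, binMatrix_mulVec_apply]
    _ = ∑ p ∈ A.1 ×ˢ A.1ᶜ with G.Adj p.1 p.2, (x p.1 - x p.2) := by
        rw [sum_neighborFinset_tokenGraph A (fun s => ∑ j ∈ A.1, x j - ∑ j ∈ s, x j)]
        refine sum_congr rfl fun p hp => ?_
        simp only [mem_filter, mem_product, mem_compl] at hp
        rw [sum_insert_erase x hp.1.1 hp.1.2]
        abel
    _ = ∑ a ∈ A.1, ∑ b ∈ A.1ᶜ, if G.Adj a b then x a - x b else 0 := by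
        rw [sum_filter, sum_product]
    _ = ∑ a ∈ A.1, ∑ b, if G.Adj a b then x a - x b else 0 := by
        -- the terms with both `a` and `b` in `A` cancel in pairs
        simp only [← sum_add_sum_compl A.1, sum_add_distrib]
        rw [sum_sum_eq_zero_of_antisymm, zero_add]
        intro a b
        simp only [G.adj_comm b a]
        split_ifs <;> simp
    _ = (binMatrix V k *ᵥ (G.lapMatrix ℝ *ᵥ x)) A := by
        simp only [binMatrix_mulVec_apply, SimpleGraph.lapMatrix_mulVec_apply_eq_sum,
          SimpleGraph.neighborFinset_eq_filter, sum_filter]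

end BinMatrix

theorem binMatrix_colSpace_lap_invariant {V : Type*} [Fintype V] [DecidableEq V]
    (G : SimpleGraph V) [DecidableRel G.Adj] (k : ℕ) :
    (∀ x : V → ℝ, ∃ y : V → ℝ,
        ((tokenGraph G k).lapMatrix ℝ).mulVec ((binMatrix V k).mulVec x) =
          (binMatrix V k).mulVec y) ∧
    (∀ v : {s : Finset V // s.card = k} → ℝ,
        (∀ x : V → ℝ, dotProduct v ((binMatrix V k).mulVec x) = 0) →
        ∀ x : V → ℝ,
          dotProduct (((tokenGraph G k).lapMatrix ℝ).mulVec v)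
            ((binMatrix V k).mulVec x) = 0) := by
  refine ⟨fun x => ⟨_, tokenGraph_lapMatrix_mulVec_binMatrix_mulVec G x⟩, fun v hv x => ?_⟩
  rw [(SimpleGraph.isSymm_lapMatrix ℝ _).mulVec_dotProduct,
    tokenGraph_lapMatrix_mulVec_binMatrix_mulVec]
  exact hv _
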